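/- In a cop-win graph G of corner rank α ≥ 2, no vertex of corner rank α−1 dominates the set X_{α−1} of all vertices of corner rank α−1; that is, no vertex b of corner rank α−1 is adjacent (in the reflexive sense) to every vertex of corner rank α−1. -/

import Mathlib

/-
Let `s = α - 1` and `S = V(G^(s))`. Every vertex of `S` has rank `s` or `α`, and `X_α`, the last
stage, is a clique. Suppose `b ∈ X_s` dominates `X_s`. As a strict corner of `S`, `b` is strictly
cornered by some `c ∈ S` that is not itself a strict corner, so `c ∈ X_α`. Then `c` dominates both
`X_s ⊆ N[b]` and the clique `X_α`, i.e. `N[c] = S`; hence every non-corner of `S`, in particular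
every vertex of `X_α`, also has all of `S` as its neighborhood and so sees `b`. Thus `N[b] = S`,
and nothing can strictly corner `b`.
-/

namespace CopsRobbers

variable {V : Type*}

/-- The closed neighborhood of `v` within the vertex set `S` (graphs are reflexive,
so `v` itself belongs to its closed neighborhood). -/
def closedNbhd (G : SimpleGraph V) (S : Set V) (v : V) : Set V :=
  {u | u ∈ S ∧ (u = v ∨ G.Adj u v)}

/-- `v` is a strict corner of the subgraph induced on `S`: some other vertex `w ∈ S`
strictly corners `v`, i.e. `N[v] ⊊ N[w]` within `S`. -/
def StrictCorner (G : SimpleGraph V) (S : Set V) (v : V) : Prop :=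
  v ∈ S ∧ ∃ w ∈ S, w ≠ v ∧ closedNbhd G S v ⊂ closedNbhd G S w

/-- The remaining vertex sets of the corner ranking procedure (0-indexed auxiliary
version): at each step all current strict corners are removed. -/
def stageAux (G : SimpleGraph V) : ℕ → Set V
  | 0 => Set.univ
  | n + 1 => stageAux G n \ {v | StrictCorner G (stageAux G n) v}

/-- `stage G k` is the vertex set of `G^(k)` (for `k ≥ 1`), so `stage G 1 = V(G)`. -/
def stage (G : SimpleGraph V) (k : ℕ) : Set V := stageAux G (k - 1)

/-- The corner rank of a vertex: the least `k ≥ 1` such that `v` is a strict corner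
of `G^(k)`, or `G^(k)` is a clique still containing `v`; and `⊤` (that is, `∞`) if
there is no such `k`. -/
noncomputable def cornerRank (G : SimpleGraph V) (v : V) : ℕ∞ :=
  sInf {k : ℕ∞ | ∃ n : ℕ, k = (n : ℕ∞) ∧ 1 ≤ n ∧
    (StrictCorner G (stage G n) v ∨ (G.IsClique (stage G n) ∧ v ∈ stage G n))}

/-- The corner rank of a graph: the largest corner rank of a vertex. -/
noncomputable def graphRank (G : SimpleGraph V) : ℕ∞ := ⨆ v, cornerRank G v

/-- A graph is cop-win iff every vertex has finite corner rank. -/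
def CopWin (G : SimpleGraph V) : Prop := ∀ v, cornerRank G v ≠ ⊤

/-- `v` dominates the set `S`: `v` is (reflexively) adjacent to every vertex of `S`. -/
def Dominates (G : SimpleGraph V) (v : V) (S : Set V) : Prop :=
  ∀ u ∈ S, u = v ∨ G.Adj v u

/-- A cop-win graph of corner rank `α ≥ 2` is `tp1` if some vertex of corner rank `α`
dominates the vertex set of `G^(α-1)`. -/
def Tp1 (G : SimpleGraph V) : Prop :=
  ∃ α : ℕ, 2 ≤ α ∧ graphRank G = (α : ℕ∞) ∧
    ∃ v, cornerRank G v = (α : ℕ∞) ∧ Dominates G v (stage G (α - 1))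

/-- `G` realizes the vector `(x_α, …, x_1)` (written as the list `[x_α, …, x_1]`):
`G` is cop-win of corner rank `α` and for each `k`, `x_k` is the number of vertices
of corner rank `k`. -/
def Realizes (G : SimpleGraph V) (x : List ℕ) : Prop :=
  CopWin G ∧ graphRank G = (x.length : ℕ∞) ∧
  ∀ i : Fin x.length,
    x.get i = {v | cornerRank G v = ((x.length - (i : ℕ) : ℕ) : ℕ∞)}.ncard

/-- `G` r-realizes `x` (for `r ∈ {0,1}`): `G` realizes `x` and `G` is tp-r. -/
def RRealizes (G : SimpleGraph V) (r : ℕ) (x : List ℕ) : Prop :=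
  Realizes G x ∧ (Tp1 G ↔ r = 1)

/-- A vector is realizable if it is the rank cardinality vector of some finite cop-win graph. -/
def Realizable (x : List ℕ) : Prop :=
  ∃ (W : Type) (_ : Fintype W) (G : SimpleGraph W), Realizes G x

/-- A vector is r-realizable if some finite tp-r cop-win graph realizes it. -/
def RRealizable (r : ℕ) (x : List ℕ) : Prop :=
  ∃ (W : Type) (_ : Fintype W) (G : SimpleGraph W), RRealizes G r x

open Classical in
/-- The capture time of a cop-win graph: `cr(G) - r(G)`. -/
noncomputable def captureTime (G : SimpleGraph V) : ℕ :=
  (graphRank G).toNat - (if Tp1 G then 1 else 0)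

end CopsRobbers

namespace CopsRobbers

variable {V : Type*} {G : SimpleGraph V}

section Corners

variable {S : Set V} {u v : V}

lemma closedNbhd_subset : closedNbhd G S v ⊆ S := fun _ hu ↦ hu.1

lemma mem_closedNbhd_comm (hu : u ∈ S) (hv : v ∈ S) :
    u ∈ closedNbhd G S v ↔ v ∈ closedNbhd G S u := by
  simp only [closedNbhd, Set.mem_ofPred_eq, hu, hv, true_and, eq_comm (a := u), G.adj_comm]

lemma not_strictCorner_of_closedNbhd_eq (h : closedNbhd G S v = S) : ¬ StrictCorner G S v :=
  fun ⟨_, _, _, _, hlt⟩ ↦ hlt.not_subset (closedNbhd_subset.trans h.ge)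

lemma closedNbhd_eq_of_not_strictCorner (hu : u ∈ S) (hnu : ¬ StrictCorner G S u) (hv : v ∈ S)
    (hNv : closedNbhd G S v = S) : closedNbhd G S u = S := by
  by_cases huv : u = v
  · rwa [huv]
  by_contra hne
  refine hnu ⟨hu, v, hv, Ne.symm huv, ?_⟩
  rw [hNv]
  exact closedNbhd_subset.ssubset_of_ne hne

lemma exists_not_strictCorner_closedNbhd_subset [Finite V] {w : V} (hw : w ∈ S) :
    ∃ c ∈ S, closedNbhd G S w ⊆ closedNbhd G S c ∧ ¬ StrictCorner G S c := by
  obtain ⟨c, ⟨hcS, hwc⟩, hmax⟩ := Set.Finite.exists_maximalFor (closedNbhd G S)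
    {u | u ∈ S ∧ closedNbhd G S w ⊆ closedNbhd G S u} (Set.toFinite _) ⟨w, hw, subset_rfl⟩
  refine ⟨c, hcS, hwc, fun ⟨_, d, hdS, _, hcd⟩ ↦ hcd.not_subset ?_⟩
  exact hmax ⟨hdS, hwc.trans hcd.subset⟩ hcd.subset

end Corners

/-- The clause of `cornerRank`: stage `n` of the procedure assigns rank `n` to `v`. -/
def RanksAt (G : SimpleGraph V) (n : ℕ) (v : V) : Prop :=
  StrictCorner G (stage G n) v ∨ (G.IsClique (stage G n) ∧ v ∈ stage G n)

variable {m n : ℕ} {v : V}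

lemma cornerRank_le_of_ranksAt (hn : 1 ≤ n) (h : RanksAt G n v) : cornerRank G v ≤ n :=
  sInf_le ⟨n, rfl, hn, h⟩

lemma ranksAt_of_cornerRank_eq (h : cornerRank G v = n) : 1 ≤ n ∧ RanksAt G n v := by
  set R := {k : ℕ∞ | ∃ n : ℕ, k = n ∧ 1 ≤ n ∧ RanksAt G n v}
  change sInf R = n at h
  have hR : R.Nonempty := Set.nonempty_iff_ne_empty.mpr fun hempty ↦
    ENat.natCast_ne_top n (by rw [← h, hempty, sInf_empty])
  obtain ⟨k, hk, hk1, hkv⟩ := csInf_mem hR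
  obtain rfl : n = k := by exact_mod_cast h.symm.trans hk
  exact ⟨hk1, hkv⟩

lemma stage_antitone : Antitone (stage G) := fun _ _ h ↦
  (antitone_nat_of_succ_le fun _ ↦ Set.sdiff_subset : Antitone (stageAux G))
    (Nat.sub_le_sub_right h 1)

lemma stage_succ (hn : 1 ≤ n) :
    stage G (n + 1) = stage G n \ {v | StrictCorner G (stage G n) v} := by
  obtain ⟨k, rfl⟩ := Nat.exists_eq_add_of_le' hn
  rfl

lemma mem_stage_of_le_cornerRank (h : (m : ℕ∞) ≤ cornerRank G v) : v ∈ stage G m := by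
  induction m with
  | zero => trivial
  | succ k ih =>
    rcases Nat.eq_zero_or_pos k with rfl | hk
    · trivial
    rw [stage_succ hk]
    refine ⟨ih ((Nat.cast_le.mpr k.le_succ).trans h), fun hcorner ↦ ?_⟩
    have hle := cornerRank_le_of_ranksAt hk (Or.inl hcorner)
    exact absurd (h.trans hle) (by norm_cast; omega)

lemma not_isClique_stage (hm : 1 ≤ m) (hlt : (m : ℕ∞) < graphRank G) :
    ¬ G.IsClique (stage G m) := by
  refine fun hclique ↦ hlt.not_ge (iSup_le fun v ↦ ?_)
  by_cases hv : v ∈ stage G m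
  · exact cornerRank_le_of_ranksAt hm (Or.inr ⟨hclique, hv⟩)
  · exact (not_le.mp (mt mem_stage_of_le_cornerRank hv)).le

lemma le_cornerRank_of_mem_stage (hle : (m : ℕ∞) ≤ graphRank G)
    (hv : v ∈ stage G m) : (m : ℕ∞) ≤ cornerRank G v := by
  by_contra! hlt
  obtain ⟨r, hr⟩ := ENat.ne_top_iff_exists.mp (hlt.trans (ENat.natCast_lt_top m)).ne
  have hrm : r < m := by exact_mod_cast hr ▸ hlt
  obtain ⟨hr1, hcorner | ⟨hclique, -⟩⟩ := ranksAt_of_cornerRank_eq hr.symm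
  · have hv' : v ∈ stage G (r + 1) := stage_antitone (Nat.succ_le_of_lt hrm) hv
    exact (stage_succ hr1 ▸ hv').2 hcorner
  · exact not_isClique_stage hr1 ((Nat.cast_lt.mpr hrm).trans_le hle) hclique

lemma strictCorner_of_cornerRank_eq (h : cornerRank G v = n) (hlt : (n : ℕ∞) < graphRank G) :
    StrictCorner G (stage G n) v := by
  obtain ⟨hn, hcorner | ⟨hclique, -⟩⟩ := ranksAt_of_cornerRank_eq h
  · exact hcorner
  · exact absurd hclique (not_isClique_stage hn hlt)

lemma not_strictCorner_of_lt_cornerRank (hm : 1 ≤ m) (h : (m : ℕ∞) < cornerRank G v) :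
    ¬ StrictCorner G (stage G m) v :=
  fun hcorner ↦ (cornerRank_le_of_ranksAt hm (Or.inl hcorner)).not_gt h

lemma isClique_stage_of_graphRank_eq [Finite V] (hrank : graphRank G = n) :
    G.IsClique (stage G n) := by
  by_contra hnot
  obtain ⟨w, hw⟩ : (stage G n).Nonempty :=
    Set.nonempty_iff_ne_empty.mpr fun h ↦ hnot (h ▸ Set.pairwise_empty _)
  obtain ⟨c, hc, -, hnc⟩ := exists_not_strictCorner_closedNbhd_subset (G := G) hw
  have hcrank : cornerRank G c = n := le_antisymm (hrank ▸ le_iSup (cornerRank G) c)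
    (le_cornerRank_of_mem_stage hrank.ge hc)
  obtain ⟨-, hcorner | ⟨hclique, -⟩⟩ := ranksAt_of_cornerRank_eq hcrank
  exacts [hnc hcorner, hnot hclique]

end CopsRobbers

theorem CopsRobbers.no_rank_pred_dominates_general
    {V : Type} [Fintype V] (G : SimpleGraph V) (α : ℕ) (hα : 2 ≤ α)
    (hrank : CopsRobbers.graphRank G = (α : ℕ∞))
    (b : V) (hb : CopsRobbers.cornerRank G b = ((α - 1 : ℕ) : ℕ∞)) :
    ¬ CopsRobbers.Dominates G b
        {v | CopsRobbers.cornerRank G v = ((α - 1 : ℕ) : ℕ∞)} := by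
  open CopsRobbers in
  intro hdom
  set s := α - 1
  set S := stage G s
  have hsα : (s : ℕ∞) < graphRank G := by rw [hrank]; norm_cast; omega
  have hsplit : ∀ u ∈ S, cornerRank G u = s ∨ (u ∈ stage G α ∧ ¬ StrictCorner G S u) := by
    refine fun u hu ↦ (le_cornerRank_of_mem_stage hsα.le hu).eq_or_lt.imp Eq.symm fun hlt ↦
      ⟨mem_stage_of_le_cornerRank ?_, not_strictCorner_of_lt_cornerRank (by omega) hlt⟩
    rw [show α = s + 1 by omega]
    exact_mod_cast Order.add_one_le_of_lt hlt
  have hbS : b ∈ S := mem_stage_of_le_cornerRank hb.ge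
  have hdomS : ∀ u, cornerRank G u = s → u ∈ closedNbhd G S b := fun u hu ↦
    ⟨mem_stage_of_le_cornerRank hu.ge, (hdom u hu).imp id SimpleGraph.Adj.symm⟩
  obtain ⟨-, w, hwS, -, hbw⟩ := strictCorner_of_cornerRank_eq hb hsα
  obtain ⟨c, hcS, hwc, hnc⟩ := exists_not_strictCorner_closedNbhd_subset hwS
  have hbc := hbw.subset.trans hwc
  have hcα : c ∈ stage G α :=
    ((hsplit c hcS).resolve_left fun hc ↦ hnc (strictCorner_of_cornerRank_eq hc hsα)).1
  have hNc : closedNbhd G S c = S := closedNbhd_subset.antisymm fun u hu ↦ by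
    rcases hsplit u hu with hus | ⟨huα, -⟩
    · exact hbc (hdomS u hus)
    · exact ⟨hu, (eq_or_ne u c).imp_right (isClique_stage_of_graphRank_eq hrank huα hcα)⟩
  have hNb : closedNbhd G S b = S := closedNbhd_subset.antisymm fun u hu ↦ by
    rcases hsplit u hu with hus | ⟨-, hnu⟩
    · exact hdomS u hus
    · rw [mem_closedNbhd_comm hu hbS, closedNbhd_eq_of_not_strictCorner hu hnu hcS hNc]
      exact hbS
  exact not_strictCorner_of_closedNbhd_eq hNb (strictCorner_of_cornerRank_eq hb hsα)

/-- in a cop-win graph of corner rank `α ≥ 2`, no vertex of corner rank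
`α - 1` dominates the set of all vertices of corner rank `α - 1`. -/
theorem CopsRobbers.no_rank_pred_dominates
    {V : Type} [Fintype V] (G : SimpleGraph V) (α : ℕ) (hα : 2 ≤ α)
    (hG : CopsRobbers.CopWin G) (hrank : CopsRobbers.graphRank G = (α : ℕ∞))
    (b : V) (hb : CopsRobbers.cornerRank G b = ((α - 1 : ℕ) : ℕ∞)) :
    ¬ CopsRobbers.Dominates G b
        {v | CopsRobbers.cornerRank G v = ((α - 1 : ℕ) : ℕ∞)} :=
  CopsRobbers.no_rank_pred_dominates_general G α hα hrank b hb
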